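/- arXiv:math/0310129 — 2 statements merged into one kernel-verified Lean document; each statement's English description precedes it below -/
import Mathlib

section
/- Let R be a Noetherian ring, I an ideal of R, and M a finitely generated R-module with Γ_I(M) = 0 (i.e., no nonzero element of M is annihilated by a power of I). Then for every natural number n, the set of associated primes of the submodule I^n • M equals the set of associated primes of M. -/
/-!
Over a Noetherian ring the associated primes are exactly the prime annihilators `Ann(m)`.
If `p = Ann(m)` is prime and `a ∉ p`, then `Ann(a • m) = p`. Since `Γ_I(M) = 0`, every nonzero
`m` has a multiple `a • m ≠ 0` with `a ∈ I ^ n`, which lies in `I ^ n • M` and necessarily has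
`a ∉ Ann(m)`; so every associated prime of `M` is already one of `I ^ n • M`.
-/

/-- The `I`-torsion submodule `Γ_I(M) = ⋃ n, (0 :_M I^n)`. -/
noncomputable def torsionGamma {R : Type*} [CommRing R] (I : Ideal R) (M : Type*)
    [AddCommGroup M] [Module R M] : Submodule R M :=
  ⨆ n : ℕ, Submodule.torsionBySet R M ((I ^ n : Ideal R) : Set R)

open Submodule

section AssociatedPrimes

variable {R M : Type*} [CommSemiring R] [AddCommMonoid M] [Module R M]

/-- The cyclic form of essentiality: `N ⊓ L ≠ ⊥` for every nonzero cyclic submodule `L`. -/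
def Submodule.IsEssential (N : Submodule R M) : Prop :=
  ∀ m : M, m ≠ 0 → ∃ a : R, a • m ∈ N ∧ a • m ≠ 0

theorem Submodule.bot_colon_singleton_smul_eq {m : M} {a : R}
    (hp : ((⊥ : Submodule R M).colon {m}).IsPrime) (ha : a ∉ (⊥ : Submodule R M).colon {m}) :
    (⊥ : Submodule R M).colon {a • m} = (⊥ : Submodule R M).colon {m} := by
  ext r
  constructor
  · intro hr
    have hra : r * a ∈ (⊥ : Submodule R M).colon {m} := by
      rwa [mem_colon_singleton, mul_smul, ← mem_colon_singleton]
    exact (hp.mem_or_mem hra).resolve_right ha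
  · intro hr
    rw [mem_colon_singleton, mem_bot] at hr ⊢
    rw [smul_comm, hr, smul_zero]

theorem Submodule.bot_colon_singleton_subtype (N : Submodule R M) (x : N) :
    (⊥ : Submodule R N).colon {x} = (⊥ : Submodule R M).colon {(x : M)} := by
  ext r
  simp only [mem_colon_singleton, mem_bot, ← coe_smul, ZeroMemClass.coe_eq_zero]

theorem Submodule.IsEssential.associatedPrimes_eq [IsNoetherianRing R] {N : Submodule R M}
    (hN : N.IsEssential) : associatedPrimes R N = associatedPrimes R M := by
  refine (associatedPrimes.subset_of_injective N.injective_subtype).antisymm ?_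
  intro p hp
  obtain ⟨hprime, m, rfl⟩ := isAssociatedPrime_iff.mp hp
  have hm : m ≠ 0 := by
    rintro rfl
    exact hprime.ne_top colon_singleton_zero
  obtain ⟨a, haN, ham⟩ := hN m hm
  have ha : a ∉ (⊥ : Submodule R M).colon {m} := by
    rwa [mem_colon_singleton, mem_bot]
  refine isAssociatedPrime_iff.mpr ⟨hprime, ⟨a • m, haN⟩, ?_⟩
  rw [bot_colon_singleton_subtype, bot_colon_singleton_smul_eq hprime ha]

end AssociatedPrimes

theorem exists_pow_smul_ne_zero_of_torsionGamma_eq_bot {R M : Type*} [CommRing R]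
    [AddCommGroup M] [Module R M] {I : Ideal R} (hGamma : torsionGamma I M = ⊥) (n : ℕ)
    {m : M} (hm : m ≠ 0) : ∃ a ∈ I ^ n, a • m ≠ 0 := by
  by_contra! h
  have hmem : m ∈ torsionGamma I M :=
    le_iSup (fun k => torsionBySet R M ((I ^ k : Ideal R) : Set R)) n
      ((mem_torsionBySet_iff _ _).mpr fun a => h a a.2)
  rw [hGamma, mem_bot] at hmem
  exact hm hmem

theorem stmt_0_general {R M : Type*} [CommRing R] [IsNoetherianRing R] [AddCommGroup M] [Module R M]
    (I : Ideal R) (hGamma : torsionGamma I M = ⊥) :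
    ∀ n : ℕ, associatedPrimes R ↥(I ^ n • (⊤ : Submodule R M)) = associatedPrimes R M := by
  intro n
  refine IsEssential.associatedPrimes_eq fun m hm => ?_
  obtain ⟨a, ha, ham⟩ := exists_pow_smul_ne_zero_of_torsionGamma_eq_bot hGamma n hm
  exact ⟨a, smul_mem_smul ha mem_top, ham⟩

/-- If `Γ_I(M) = 0`, then for every `n`, `Ass(I^n • M) = Ass(M)`. -/
theorem stmt_0 {R M : Type*} [CommRing R] [IsNoetherianRing R] [AddCommGroup M] [Module R M]
    [Module.Finite R M] (I : Ideal R) (hGamma : torsionGamma I M = ⊥) :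
    ∀ n : ℕ, associatedPrimes R ↥(I ^ n • (⊤ : Submodule R M)) = associatedPrimes R M :=
  stmt_0_general I hGamma
end

section
/- Let R be a Noetherian ring, I an ideal, M a finitely generated R-module, and f ∈ R. The following are equivalent: (a) multiplication by f on M / Γ_I(M) is injective; (b) there exists n₀ such that for all n ≥ n₀, multiplication by f on I^n • M is injective. -/
/-!
By Noetherianity the chain `(0 :_M I^n)` stabilises, so `Γ_I(M) = (0 :_M I^c)` for some `c`.
If `f` is regular on `M/Γ_I(M)`, any `x ∈ I^n M` with `f x = 0` lies in `Γ_I(M) ∩ I^n M`, which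
vanishes for large `n` by Artin–Rees since `I^c` kills `Γ_I(M)`. Conversely, if `f x ∈ Γ_I(M)` and
`a ∈ I^n` with `n ≥ max c n₀`, then `a x ∈ I^n M` is killed by `f`, hence `a x = 0`, so `x ∈ Γ_I(M)`.
-/

open Submodule

section

variable {R M : Type*} [CommRing R] [AddCommGroup M] [Module R M] (I : Ideal R)

theorem mem_torsionGamma_iff (x : M) :
    x ∈ torsionGamma I M ↔ ∃ n : ℕ, x ∈ torsionBySet R M ((I ^ n : Ideal R) : Set R) :=
  mem_iSup_of_directed _
    (Monotone.directed_le fun i j h => torsionBySet_le_torsionBySet_pow i j h I)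

theorem exists_torsionGamma_eq_torsionBySet_pow [IsNoetherian R M] :
    ∃ c : ℕ, torsionGamma I M = torsionBySet R M ((I ^ c : Ideal R) : Set R) := by
  obtain ⟨c, hc⟩ := monotone_stabilizes_iff_noetherian.mpr ‹IsNoetherian R M›
    ⟨fun n => torsionBySet R M ((I ^ n : Ideal R) : Set R),
      fun i j h => torsionBySet_le_torsionBySet_pow i j h I⟩
  refine ⟨c, le_antisymm (iSup_le fun n => ?_) (le_iSup_of_le c le_rfl)⟩
  rcases le_total n c with h | h
  · exact torsionBySet_le_torsionBySet_pow n c h I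
  · exact (hc n h).ge

theorem exists_pow_smul_top_inf_eq_bot [IsNoetherianRing R] [Module.Finite R M]
    {N : Submodule R M} {c : ℕ} (hN : N ≤ torsionBySet R M ((I ^ c : Ideal R) : Set R)) :
    ∃ k : ℕ, ∀ n ≥ k, I ^ n • ⊤ ⊓ N = ⊥ := by
  obtain ⟨k, hk⟩ := I.exists_pow_inf_eq_pow_smul N
  refine ⟨k + c, fun n hn => ?_⟩
  have hIcN : I ^ c • N = ⊥ := eq_bot_iff.mpr <| smul_le.mpr fun r hr m hm =>
    (mem_bot R).mpr <| (mem_torsionBySet_iff _ _).mp (hN hm) ⟨r, hr⟩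
  rw [hk n (by omega), eq_bot_iff, ← hIcN]
  exact smul_mono (Ideal.pow_le_pow_right (by omega)) inf_le_right

end

/-- Multiplication by `f` is injective on `M/Γ_I(M)` iff it is injective on `I^n • M`
for all large `n`. -/
theorem stmt_2 {R M : Type*} [CommRing R] [IsNoetherianRing R] [AddCommGroup M] [Module R M]
    [Module.Finite R M] (I : Ideal R) (f : R) :
    Function.Injective (fun x : M ⧸ torsionGamma I M => f • x) ↔
      ∃ n₀ : ℕ, ∀ n ≥ n₀,
        Function.Injective (fun x : ↥(I ^ n • (⊤ : Submodule R M)) => f • x) := by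
  change IsSMulRegular _ f ↔ ∃ n₀ : ℕ, ∀ n ≥ n₀, IsSMulRegular (I ^ n • ⊤ : Submodule R M) f
  simp_rw [isSMulRegular_quotient_iff_mem_of_smul_mem,
    isSMulRegular_submodule_iff_right_eq_zero_of_smul]
  obtain ⟨c, hc⟩ := exists_torsionGamma_eq_torsionBySet_pow (M := M) I
  constructor
  · intro hΓ
    obtain ⟨k, hk⟩ := exists_pow_smul_top_inf_eq_bot I hc.le
    refine ⟨k, fun n hn x hx hfx => ?_⟩
    have hxΓ : x ∈ torsionGamma I M := hΓ x (hfx ▸ zero_mem _)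
    rw [← mem_bot R, ← hk n hn]
    exact ⟨hx, hxΓ⟩
  · rintro ⟨n₀, hn₀⟩ x hfx
    rw [hc, mem_torsionBySet_iff] at hfx
    refine (mem_torsionGamma_iff I x).mpr ⟨max c n₀, (mem_torsionBySet_iff _ _).mpr ?_⟩
    rintro ⟨a, ha⟩
    refine hn₀ _ (le_max_right c n₀) _ (smul_mem_smul ha mem_top) ?_
    rw [smul_comm]
    exact hfx ⟨a, Ideal.pow_le_pow_right (le_max_left c n₀) ha⟩
end
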